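/- arXiv:2012.09663 — 5 statements merged into one kernel-verified Lean document; each statement's English description precedes it below -/
import Mathlib

section
/- Soundness of the lazy synthesis meta-heuristic (Algorithm 1). Let M be a monoid, let Γin and Γout be types of input and output gates with interpretations jin : Γin → M and jout : Γout → M, and interpret a circuit (a list of gates) as the product of its gates' interpretations multiplied in reverse order (later gates multiplied on the left); denote this ⟦c⟧. Let H be a type with interp : H → M, let S : Γin → Prop be a decidable predicate, let u : H → Γin → H satisfy interp (u h g) = jin g * interp h for every h and every g with S g, and let e : H → Γin → H × List Γout satisfy jin g * interp h = interp (e h g).1 * ⟦(e h g).2⟧ for every h and every g with ¬ S g. Define the compilation of an input list c_in : List Γin by folding from an initial pair (h₀, []): for each successive gate g, if S g holds replace h by u h g, and otherwise replace h by (e h g).1 and append the circuit (e h g).2 to the output list. Then for every h₀ and every c_in, the resulting pair (h, c_out) satisfies ⟦c_in⟧ * interp h₀ = interp h * ⟦c_out⟧. -/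
/-- Interpretation of a circuit (a list of gates) in a monoid: the product of the
gate interpretations taken in reverse order, `⟦[g₁, …, gₖ]⟧ = j gₖ * ⋯ * j g₁`. -/
def interpCircuit {Γ M : Type*} [Monoid M] (j : Γ → M) (c : List Γ) : M :=
  ((c.map j).reverse).prod

/-- The lazy synthesis meta-heuristic (Algorithm 1): fold over the input circuit,
absorbing gates in `S` into the data structure via `u`, and extracting subcircuits
via `e` for gates outside `S`. -/
def lazySynth {Γin Γout H : Type*} (S : Γin → Prop) [DecidablePred S]
    (u : H → Γin → H) (e : H → Γin → H × List Γout)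
    (h₀ : H) (cin : List Γin) : H × List Γout :=
  cin.foldl
    (fun p g => if S g then (u p.1 g, p.2) else ((e p.1 g).1, p.2 ++ (e p.1 g).2))
    (h₀, ([] : List Γout))

lemma interpCircuit_cons {Γ M : Type*} [Monoid M] (j : Γ → M) (g : Γ) (c : List Γ) :
    interpCircuit j (g :: c) = interpCircuit j c * j g := by
  simp [interpCircuit]

lemma interpCircuit_append {Γ M : Type*} [Monoid M] (j : Γ → M) (a b : List Γ) :
    interpCircuit j (a ++ b) = interpCircuit j b * interpCircuit j a := by
  simp [interpCircuit]

lemma lazy_aux {Γin Γout H M : Type*} [Monoid M]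
    (jin : Γin → M) (jout : Γout → M) (interp : H → M)
    (S : Γin → Prop) [DecidablePred S]
    (u : H → Γin → H) (e : H → Γin → H × List Γout)
    (hu : ∀ (h : H) (g : Γin), S g → interp (u h g) = jin g * interp h)
    (he : ∀ (h : H) (g : Γin), ¬ S g →
      jin g * interp h = interp (e h g).1 * interpCircuit jout (e h g).2)
    (cin : List Γin) : ∀ (h₀ : H) (acc : List Γout),
    interp (cin.foldl
      (fun p g => if S g then (u p.1 g, p.2) else ((e p.1 g).1, p.2 ++ (e p.1 g).2))
      (h₀, acc)).1 *
    interpCircuit jout (cin.foldl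
      (fun p g => if S g then (u p.1 g, p.2) else ((e p.1 g).1, p.2 ++ (e p.1 g).2))
      (h₀, acc)).2
    = interpCircuit jin cin * interp h₀ * interpCircuit jout acc := by
  induction cin with
  | nil => intro h₀ acc; simp [interpCircuit]
  | cons g cin ih =>
    intro h₀ acc
    by_cases hS : S g
    · simp only [List.foldl_cons, if_pos hS]
      rw [ih, hu _ _ hS, interpCircuit_cons]
      simp [mul_assoc]
    · simp only [List.foldl_cons, if_neg hS]
      rw [ih, interpCircuit_append, interpCircuit_cons]
      calc interpCircuit jin cin * interp (e h₀ g).1 *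
            (interpCircuit jout (e h₀ g).2 * interpCircuit jout acc)
          = interpCircuit jin cin *
              (interp (e h₀ g).1 * interpCircuit jout (e h₀ g).2) *
              interpCircuit jout acc := by simp [mul_assoc]
        _ = interpCircuit jin cin * (jin g * interp h₀) * interpCircuit jout acc := by
              rw [he _ _ hS]
        _ = interpCircuit jin cin * jin g * interp h₀ * interpCircuit jout acc := by
              simp [mul_assoc]

/-- Soundness of the lazy synthesis meta-heuristic. -/
theorem lazy_synthesis_sound {Γin Γout H M : Type*} [Monoid M]
    (jin : Γin → M) (jout : Γout → M) (interp : H → M)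
    (S : Γin → Prop) [DecidablePred S]
    (u : H → Γin → H) (e : H → Γin → H × List Γout)
    (hu : ∀ (h : H) (g : Γin), S g → interp (u h g) = jin g * interp h)
    (he : ∀ (h : H) (g : Γin), ¬ S g →
      jin g * interp h = interp (e h g).1 * interpCircuit jout (e h g).2)
    (h₀ : H) (cin : List Γin) :
    interpCircuit jin cin * interp h₀ =
      interp (lazySynth S u e h₀ cin).1 *
        interpCircuit jout (lazySynth S u e h₀ cin).2 := by
  have := lazy_aux jin jout interp S u e hu he cin h₀ []
  simpa [lazySynth, interpCircuit] using this.symm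
end

section
/- Property 1 (shape-(1) commutation): let A be an invertible n×n matrix over ZMod 2 and q : Fin n such that A.mulVec e_q = e_q and Aᵀ.mulVec e_q = e_q (both column q and row q of A equal the standard basis vector e_q). Then the linear-reversible unitary M_A commutes with every one-qubit gate on qubit q: for every g : Matrix (ZMod 2) (ZMod 2) ℂ, G_q(g) * M_A = M_A * G_q(g). -/
open Matrix

/-- The linear-reversible unitary `M_A`: the permutation matrix of the basis-state
map `|x⟩ ↦ |A x⟩`. -/
noncomputable def linUnitary {n : ℕ} (A : Matrix (Fin n) (Fin n) (ZMod 2)) :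
    Matrix (Fin n → ZMod 2) (Fin n → ZMod 2) ℂ :=
  Matrix.of fun y x => if y = A.mulVec x then 1 else 0

/-- The one-qubit gate `g` applied on qubit `q` (identity elsewhere). -/
noncomputable def oneQubitGate {n : ℕ} (q : Fin n) (g : Matrix (ZMod 2) (ZMod 2) ℂ) :
    Matrix (Fin n → ZMod 2) (Fin n → ZMod 2) ℂ :=
  Matrix.of fun y x => if ∀ i, i ≠ q → y i = x i then g (y q) (x q) else 0

/-- Property 1 (shape-(1) commutation): if both column `q` and row `q` of the
invertible table `A` equal the standard basis vector `e_q`, then `M_A` commutes with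
every one-qubit gate on qubit `q`. -/
theorem oneQubitGate_comm_linUnitary {n : ℕ} (A : Matrix (Fin n) (Fin n) (ZMod 2))
    (hA : IsUnit A) (q : Fin n)
    (hcol : A.mulVec (Pi.single q 1) = Pi.single q 1)
    (hrow : Aᵀ.mulVec (Pi.single q 1) = Pi.single q 1)
    (g : Matrix (ZMod 2) (ZMod 2) ℂ) :
    oneQubitGate q g * linUnitary A = linUnitary A * oneQubitGate q g := by
  classical
  have hAcol : ∀ i, A i q = if i = q then 1 else 0 := by
    intro i
    have := congrFun hcol i
    simpa [Matrix.mulVec_single, Pi.single_apply] using this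
  have hArow : ∀ j, A q j = if j = q then 1 else 0 := by
    intro j
    have := congrFun hrow j
    simpa [Matrix.mulVec_single, Pi.single_apply, Matrix.transpose_apply] using this
  have hq : ∀ v : Fin n → ZMod 2, A.mulVec v q = v q := by
    intro v
    simp [Matrix.mulVec, dotProduct, hArow, ite_mul]
  have hupd : ∀ (x : Fin n → ZMod 2) (c : ZMod 2),
      A.mulVec (Function.update x q c) = Function.update (A.mulVec x) q c := by
    intro x c
    funext i
    rcases eq_or_ne i q with rfl | hi
    · simp [hq, Function.update_self]
    · rw [Function.update_of_ne hi]
      simp only [Matrix.mulVec, dotProduct]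
      refine Finset.sum_congr rfl fun j _ => ?_
      rcases eq_or_ne j q with rfl | hj
      · simp [hAcol, hi]
      · rw [Function.update_of_ne hj]
  ext y x
  set c := y q with hc
  set x' := Function.update x q c with hx'
  have key : (∀ i, i ≠ q → y i = A.mulVec x i) ↔ y = A.mulVec x' := by
    rw [hx', hupd]
    constructor
    · intro h
      funext i
      rcases eq_or_ne i q with rfl | hi
      · simp [hc]
      · rw [Function.update_of_ne hi, h i hi]
    · intro h i hi
      rw [h, Function.update_of_ne hi]
  rw [Matrix.mul_apply, Matrix.mul_apply]
  have hL : ∀ z, oneQubitGate q g y z * linUnitary A z x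
      = if z = A.mulVec x then (if ∀ i, i ≠ q → y i = z i then g (y q) (z q) else 0) else 0 := by
    intro z
    simp only [oneQubitGate, linUnitary, Matrix.of_apply, mul_ite, mul_one, mul_zero, ite_mul,
      zero_mul]
  have hR : ∀ z ∈ Finset.univ, z ≠ x' →
      linUnitary A y z * oneQubitGate q g z x = 0 := by
    intro z _ hz
    simp only [linUnitary, oneQubitGate, Matrix.of_apply, ite_mul, one_mul, zero_mul]
    split
    · rename_i hyz
      split
      · rename_i hzx
        exfalso
        apply hz
        funext i
        rcases eq_or_ne i q with rfl | hi
        · rw [hx', Function.update_self, hc, hyz, hq]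
        · rw [hx', Function.update_of_ne hi, hzx i hi]
      · rfl
    · rfl
  rw [Finset.sum_congr rfl fun z _ => hL z, Finset.sum_ite_eq' Finset.univ,
    Finset.sum_eq_single_of_mem x' (Finset.mem_univ x') hR]
  simp only [Finset.mem_univ, if_true]
  have hx'q : x' q = c := Function.update_self q c x
  have hx'cond : ∀ i, i ≠ q → x' i = x i := fun i hi => Function.update_of_ne hi c x
  simp only [linUnitary, oneQubitGate, Matrix.of_apply, hx'cond, hx'q, hq, if_pos,
    ite_mul, one_mul, zero_mul]
  rw [if_pos hx'cond]
  by_cases hk : ∀ i, i ≠ q → y i = A.mulVec x i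
  · rw [if_pos hk, if_pos (key.mp hk), hc]
  · rw [if_neg hk, if_neg (fun h => hk (key.mpr h))]
end

section
/- Shape (1) up to a column permutation (the relocation identity of Eq. (2)): let A be an invertible n×n matrix over ZMod 2 and q, q' : Fin n such that A.mulVec e_{q'} = e_q (column q' of A equals e_q) and Aᵀ.mulVec e_q = e_{q'} (row q of A equals e_{q'}). Then for every one-qubit gate g : Matrix (ZMod 2) (ZMod 2) ℂ, G_q(g) * M_A = M_A * G_{q'}(g); that is, the gate g intended for qubit q can be applied on qubit q' before the linear operator A. -/
open Matrix

/-- Shape (1) up to a column permutation (the relocation identity of Eq. (2)): if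
column `q'` of `A` equals `e_q` and row `q` of `A` equals `e_{q'}`, then the gate `g`
intended for qubit `q` can be applied on qubit `q'` before the linear operator `A`. -/
theorem oneQubitGate_relocate_linUnitary {n : ℕ} (A : Matrix (Fin n) (Fin n) (ZMod 2))
    (hA : IsUnit A) (q q' : Fin n)
    (hcol : A.mulVec (Pi.single q' 1) = Pi.single q 1)
    (hrow : Aᵀ.mulVec (Pi.single q 1) = Pi.single q' 1)
    (g : Matrix (ZMod 2) (ZMod 2) ℂ) :
    oneQubitGate q g * linUnitary A = linUnitary A * oneQubitGate q' g := by
  have hd := (Matrix.isUnit_iff_isUnit_det A).mp hA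
  have hAi : A * A⁻¹ = 1 := Matrix.mul_nonsing_inv A hd
  have hiA : A⁻¹ * A = 1 := Matrix.nonsing_inv_mul A hd
  have hinj : Function.Injective A.mulVec := by
    intro v w h
    have := congrArg (A⁻¹.mulVec) h
    simpa [Matrix.mulVec_mulVec, hiA, Matrix.one_mulVec] using this
  have hrowf : ∀ j, A q j = (Pi.single q' 1 : Fin n → ZMod 2) j := by
    intro j
    have := congrFun hrow j
    simpa [Matrix.mulVec, dotProduct, Matrix.transpose_apply, Pi.single_apply,
      mul_ite, Finset.sum_ite_eq] using this
  have hq1 : ∀ v : Fin n → ZMod 2, A.mulVec v q = v q' := by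
    intro v
    simp only [Matrix.mulVec, dotProduct]
    rw [Finset.sum_congr rfl fun j _ => by rw [hrowf j]]
    simp [Pi.single_apply, ite_mul, Finset.sum_ite_eq]
  have hker : ∀ v : Fin n → ZMod 2,
      (∀ i, i ≠ q → A.mulVec v i = 0) ↔ (∀ i, i ≠ q' → v i = 0) := by
    intro v
    constructor
    · intro h
      have hv : A.mulVec v = A.mulVec (A.mulVec v q • Pi.single q' 1) := by
        rw [Matrix.mulVec_smul, hcol]
        funext i
        by_cases hi : i = q
        · subst hi; simp [Pi.single_apply]
        · simp [h i hi, Pi.single_apply, hi]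
      have hv2 := hinj hv
      intro i hi
      rw [hv2]
      simp [Pi.single_apply, hi]
    · intro h
      have hv : v = v q' • Pi.single q' 1 := by
        funext i
        by_cases hi : i = q'
        · subst hi; simp
        · simp [h i hi, Pi.single_apply, hi]
      intro i hi
      rw [hv, Matrix.mulVec_smul, hcol]
      simp [Pi.single_apply, hi]
  ext y x
  set u := A⁻¹.mulVec y with hu
  have hy : A.mulVec u = y := by
    rw [hu, Matrix.mulVec_mulVec, hAi, Matrix.one_mulVec]
  have hL : (oneQubitGate q g * linUnitary A) y x
      = (if ∀ i, i ≠ q → y i = A.mulVec x i then g (y q) (A.mulVec x q) else 0) := by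
    rw [Matrix.mul_apply]
    rw [Finset.sum_eq_single (A.mulVec x)]
    · simp [oneQubitGate, linUnitary]
    · intro z _ hz; simp [linUnitary, hz]
    · intro h; exact absurd (Finset.mem_univ _) h
  have hR : (linUnitary A * oneQubitGate q' g) y x
      = (if ∀ i, i ≠ q' → u i = x i then g (u q') (x q') else 0) := by
    rw [Matrix.mul_apply]
    rw [Finset.sum_eq_single u]
    · simp [oneQubitGate, linUnitary, hy]
    · intro z _ hz
      have hne : y ≠ A.mulVec z := by
        intro h
        apply hz
        rw [hu, h, Matrix.mulVec_mulVec, hiA, Matrix.one_mulVec]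
      simp [linUnitary, hne]
    · intro h; exact absurd (Finset.mem_univ _) h
  rw [hL, hR]
  have hcond : (∀ i, i ≠ q → y i = A.mulVec x i) ↔ (∀ i, i ≠ q' → u i = x i) := by
    have hk := hker (u - x)
    rw [Matrix.mulVec_sub] at hk
    constructor
    · intro h i hi
      have h2 : ∀ j, j ≠ q → (A.mulVec u - A.mulVec x) j = 0 := by
        intro j hj
        simp [Pi.sub_apply, hy, h j hj]
      have := hk.mp h2 i hi
      exact sub_eq_zero.mp (by simpa using this)
    · intro h i hi
      have h2 : ∀ j, j ≠ q' → (u - x) j = 0 := fun j hj => by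
        simp [Pi.sub_apply, h j hj]
      have h3 := hk.mpr h2 i hi
      have h4 : A.mulVec u i = A.mulVec x i := sub_eq_zero.mp (by simpa using h3)
      rw [← hy]; exact h4
  by_cases hc : ∀ i, i ≠ q → y i = A.mulVec x i
  · rw [if_pos hc, if_pos (hcond.mp hc)]
    have e1 : y q = u q' := by rw [← hy]; exact hq1 u
    have e2 : A.mulVec x q = x q' := hq1 x
    rw [e1, e2]
  · rw [if_neg hc, if_neg (fun h => hc (hcond.mpr h))]
end

section
/- Operator form of Proposition 1 (correctness of the Clifford extraction step): let U and V be unitary complex matrices of the same square size, let P, P', Q be square complex matrices of that size, let s ∈ ℝ with s = 1 or s = −1, and let θ ∈ ℝ. Assume (star U) * P * U = (s : ℂ) • P' (the stored Clifford operator U conjugates the rotation axis P to the signed axis s·P') and V * P' * (star V) = Q (the preparation circuit V reduces P' to Q, e.g. to a single-qubit Z). Then R_P(θ) * U = (U * star V) * (R_Q(s * θ) * V); that is, the Pauli rotation commuted past U equals the updated operator U · V† followed by the extracted circuit R_Q(s·θ) · V. -/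
/-- The Pauli rotation `R_P(θ) = cos(θ/2)·1 − i·sin(θ/2)·P`. -/
noncomputable def pauliRot {ι : Type*} [Fintype ι] [DecidableEq ι]
    (P : Matrix ι ι ℂ) (θ : ℝ) : Matrix ι ι ℂ :=
  (Complex.cos (θ / 2)) • 1 - (Complex.I * Complex.sin (θ / 2)) • P

/-- Operator form of Proposition 1 (correctness of the Clifford extraction step):
if the stored Clifford operator `U` conjugates the axis `P` to the signed axis
`s • P'` and the preparation circuit `V` reduces `P'` to `Q`, then the Pauli rotation
commuted past `U` equals the updated operator `U · V†` followed by the extracted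
circuit `R_Q(s·θ) · V`. -/
theorem clifford_extraction_correct {ι : Type*} [Fintype ι] [DecidableEq ι]
    (U V : Matrix ι ι ℂ)
    (hU : U ∈ Matrix.unitaryGroup ι ℂ) (hV : V ∈ Matrix.unitaryGroup ι ℂ)
    (P P' Q : Matrix ι ι ℂ) (s : ℝ) (hs : s = 1 ∨ s = -1) (θ : ℝ)
    (h1 : star U * P * U = (s : ℂ) • P')
    (h2 : V * P' * star V = Q) :
    pauliRot P θ * U = (U * star V) * (pauliRot Q (s * θ) * V) := by
  have hU2 : U * star U = 1 := hU.2
  have hV1 : star V * V = 1 := hV.1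
  have hPU : P * U = U * ((s:ℂ) • P') := by
    calc P * U = (U * star U) * P * U := by rw [hU2, one_mul]
    _ = U * (star U * P * U) := by noncomm_ring
    _ = U * ((s:ℂ) • P') := by rw [h1]
  have hQV : star V * Q * V = P' := by
    rw [← h2]
    calc star V * (V * P' * star V) * V
        = (star V * V) * P' * (star V * V) := by noncomm_ring
    _ = P' := by rw [hV1, one_mul, mul_one]
  have hc : Complex.cos (↑(s * θ) / 2) = Complex.cos (θ / 2) := by
    rcases hs with rfl | rfl <;> push_cast <;> ring_nf <;>
      simp [neg_div, Complex.cos_neg]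
  have hsin : Complex.sin (↑(s * θ) / 2) = (s:ℂ) * Complex.sin (θ / 2) := by
    rcases hs with rfl | rfl <;> push_cast <;> ring_nf <;>
      simp [neg_div, Complex.sin_neg]
  unfold pauliRot
  rw [hc, hsin]
  have hs2 : (s:ℂ) * (s:ℂ) = 1 := by rcases hs with rfl | rfl <;> norm_num
  rw [sub_mul, sub_mul, mul_sub, smul_mul_assoc, one_mul, smul_mul_assoc,
    smul_mul_assoc, one_mul, smul_mul_assoc, Matrix.mul_smul, Matrix.mul_smul, hPU]
  rw [show (U * star V) * (Q * V) = U * (star V * Q * V) by noncomm_ring, hQV]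
  rw [show (U * star V) * V = U * (star V * V) by noncomm_ring, hV1, mul_one]
  rw [Matrix.mul_smul, smul_smul]
  congr 2
  ring
end

section
/- The set of operators implementable by CNOT circuits contains all qubit permutations: for every σ ∈ Equiv.Perm (Fin n), the qubit-permutation unitary P_σ lies in the submonoid of n-qubit complex matrices generated by the CNOT unitaries {CNOT_{i,j} : i, j : Fin n, i ≠ j}. -/
/-- The CNOT unitary with control `i` and target `j`. -/
noncomputable def cnot {n : ℕ} (i j : Fin n) :
    Matrix (Fin n → ZMod 2) (Fin n → ZMod 2) ℂ :=
  Matrix.of fun y x => if y = x + x i • (Pi.single j 1 : Fin n → ZMod 2) then 1 else 0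

/-- The qubit-permutation unitary `P_σ`: the 0-1 matrix sending the basis state
labelled `x` to the one labelled `x ∘ σ⁻¹`. -/
noncomputable def permUnitary {n : ℕ} (σ : Equiv.Perm (Fin n)) :
    Matrix (Fin n → ZMod 2) (Fin n → ZMod 2) ℂ :=
  Matrix.of fun y x => if y = x ∘ ⇑σ⁻¹ then 1 else 0

noncomputable def fmat {n : ℕ} (f : (Fin n → ZMod 2) → (Fin n → ZMod 2)) :
    Matrix (Fin n → ZMod 2) (Fin n → ZMod 2) ℂ :=
  Matrix.of fun y x => if y = f x then 1 else 0

lemma fmat_mul {n : ℕ} (f g : (Fin n → ZMod 2) → (Fin n → ZMod 2)) :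
    fmat f * fmat g = fmat (f ∘ g) := by
  ext y x
  simp only [fmat, Matrix.mul_apply, Matrix.of_apply, Function.comp_apply,
    ite_mul, one_mul, zero_mul, mul_ite, mul_one, mul_zero]
  rw [Finset.sum_ite_eq' Finset.univ (g x) (fun z => if y = f z then (1:ℂ) else 0)]
  simp

lemma cnot_eq_fmat {n : ℕ} (i j : Fin n) :
    cnot i j = fmat (fun x => x + x i • (Pi.single j 1 : Fin n → ZMod 2)) := rfl

lemma permUnitary_eq_fmat {n : ℕ} (σ : Equiv.Perm (Fin n)) :
    permUnitary σ = fmat (fun x => x ∘ ⇑σ⁻¹) := rfl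

lemma permUnitary_one {n : ℕ} : permUnitary (1 : Equiv.Perm (Fin n)) = 1 := by
  ext y x
  simp [permUnitary, Matrix.one_apply, eq_comm, Function.comp]

lemma permUnitary_mul {n : ℕ} (σ τ : Equiv.Perm (Fin n)) :
    permUnitary (σ * τ) = permUnitary σ * permUnitary τ := by
  rw [permUnitary_eq_fmat, permUnitary_eq_fmat, permUnitary_eq_fmat, fmat_mul]
  congr 1

lemma swap_fun_eq {n : ℕ} (i j : Fin n) (h : i ≠ j) (x : Fin n → ZMod 2) :
    x ∘ ⇑(Equiv.swap i j)⁻¹ =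
      (((fun x => x + x i • (Pi.single j 1 : Fin n → ZMod 2)) ∘
        (fun x => x + x j • (Pi.single i 1 : Fin n → ZMod 2))) ∘
        (fun x => x + x i • (Pi.single j 1 : Fin n → ZMod 2))) x := by
  funext k
  have hsw : (Equiv.swap i j)⁻¹ = Equiv.swap i j := by simp
  simp only [hsw, Function.comp_apply, Pi.add_apply, Pi.smul_apply]
  rcases eq_or_ne k i with rfl | hki
  · simp [Pi.single_apply, h, h.symm, Equiv.swap_apply_left]
    generalize x k = a
    generalize x j = b
    revert a b; decide
  · rcases eq_or_ne k j with rfl | hkj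
    · simp [Pi.single_apply, hki, hki.symm, Equiv.swap_apply_right]
      generalize x i = a
      generalize x k = b
      revert a b; decide
    · simp [Pi.single_apply, hki, hkj, Equiv.swap_apply_of_ne_of_ne hki hkj]

lemma permUnitary_swap {n : ℕ} (i j : Fin n) (h : i ≠ j) :
    permUnitary (Equiv.swap i j) = cnot i j * cnot j i * cnot i j := by
  rw [permUnitary_eq_fmat, cnot_eq_fmat, cnot_eq_fmat, fmat_mul, fmat_mul]
  rw [show (fun x : Fin n → ZMod 2 => x ∘ ⇑(Equiv.swap i j)⁻¹) =
    (((fun x => x + x i • (Pi.single j 1 : Fin n → ZMod 2)) ∘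
      (fun x => x + x j • (Pi.single i 1 : Fin n → ZMod 2))) ∘
      (fun x => x + x i • (Pi.single j 1 : Fin n → ZMod 2))) from funext (swap_fun_eq i j h)]

/-- The set of operators implementable by CNOT circuits contains all qubit
permutations. -/
theorem permUnitary_mem_closure_cnot {n : ℕ} (σ : Equiv.Perm (Fin n)) :
    permUnitary σ ∈ Submonoid.closure {C : Matrix (Fin n → ZMod 2) (Fin n → ZMod 2) ℂ |
      ∃ i j : Fin n, i ≠ j ∧ C = cnot i j} := by
  refine Equiv.Perm.swap_induction_on σ ?_ ?_
  · rw [permUnitary_one]; exact one_mem _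
  · intro τ i j hij ih
    rw [permUnitary_mul, permUnitary_swap i j hij]
    refine mul_mem (mul_mem (mul_mem ?_ ?_) ?_) ih
    · exact Submonoid.subset_closure ⟨i, j, hij, rfl⟩
    · exact Submonoid.subset_closure ⟨j, i, hij.symm, rfl⟩
    · exact Submonoid.subset_closure ⟨i, j, hij, rfl⟩
end
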